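/- Suppose (f_j^R, f_j^I) satisfy condition H1 with constants λ_j^{RR}, λ_j^{RI}, λ_j^{IR}, λ_j^{II} and (g_j^R, g_j^I) satisfy condition H2 with constants μ_j^{RR}, μ_j^{RI}, μ_j^{IR}, μ_j^{II}, for j = 1,…,n. Suppose there exist positive reals ξ_1,…,ξ_n, φ_1,…,φ_n such that for every k = 1,…,n both: (i) −ξ_k d_k + [ξ_k a_{kk}^R + Σ_{j≠k} ξ_j|a_{jk}^R| + Σ_{j=1}^n φ_j|a_{jk}^I|]⁺ λ_k^{RR} + [−ξ_k a_{kk}^I + Σ_{j≠k} ξ_j|a_{jk}^I| + Σ_{j=1}^n φ_j|a_{jk}^R|]⁺ λ_k^{IR} + Σ_{j=1}^n [ξ_j(|b_{jk}^R|μ_k^{RR} + |b_{jk}^I|μ_k^{IR}) + φ_j(|b_{jk}^R|μ_k^{IR} + |b_{jk}^I|μ_k^{RR})] < 0, and (ii) −φ_k d_k + [φ_k a_{kk}^R + Σ_{j≠k} φ_j|a_{jk}^R| + Σ_{j=1}^n ξ_j|a_{jk}^I|]⁺ λ_k^{II} + [φ_k a_{kk}^I + Σ_{j≠k} φ_j|a_{jk}^I|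 + Σ_{j=1}^n ξ_j|a_{jk}^R|]⁺ λ_k^{RI} + Σ_{j=1}^n [ξ_j(|b_{jk}^R|μ_k^{RI} + |b_{jk}^I|μ_k^{II}) + φ_j(|b_{jk}^R|μ_k^{II} + |b_{jk}^I|μ_k^{RI})] < 0. If the network admits at least one solution, then it has exactly one equilibrium Z̄ ∈ ℝ^{2n}, and for every solution Z(t) there exist constants c > 0 and δ > 0 such that ‖Z(t) − Z̄‖ ≤ c e^{−δt} (Euclidean norm) for all t ≥ 0. -/

import Mathlib

open Finset

/-- A solution of the delayed complex-valued network, decomposed into real and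
imaginary parts. -/
def IsSolution (n : ℕ) (d : Fin n → ℝ)
    (aR aI bR bI τ : Fin n → Fin n → ℝ)
    (uR uI : Fin n → ℝ)
    (fR fI gR gI : Fin n → ℝ → ℝ → ℝ)
    (zR zI : Fin n → ℝ → ℝ) : Prop :=
  (∀ j, ContDiff ℝ 1 (zR j)) ∧ (∀ j, ContDiff ℝ 1 (zI j)) ∧
  (∀ j : Fin n, ∀ t : ℝ, 0 ≤ t →
    deriv (zR j) t =
      -(d j) * zR j t
      + (∑ k, (aR j k * fR k (zR k t) (zI k t) - aI j k * fI k (zR k t) (zI k t)))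
      + (∑ k, (bR j k * gR k (zR k (t - τ j k)) (zI k (t - τ j k))
               - bI j k * gI k (zR k (t - τ j k)) (zI k (t - τ j k))))
      + uR j) ∧
  (∀ j : Fin n, ∀ t : ℝ, 0 ≤ t →
    deriv (zI j) t =
      -(d j) * zI j t
      + (∑ k, (aR j k * fI k (zR k t) (zI k t) + aI j k * fR k (zR k t) (zI k t)))
      + (∑ k, (bR j k * gI k (zR k (t - τ j k)) (zI k (t - τ j k))
               + bI j k * gR k (zR k (t - τ j k)) (zI k (t - τ j k))))
      + uI j)

/-- An equilibrium of the network: a point of ℝ^{2n} at which both right-hand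
sides vanish. -/
def IsEquilibrium (n : ℕ) (d : Fin n → ℝ)
    (aR aI bR bI : Fin n → Fin n → ℝ)
    (uR uI : Fin n → ℝ)
    (fR fI gR gI : Fin n → ℝ → ℝ → ℝ)
    (zbR zbI : Fin n → ℝ) : Prop :=
  (∀ j : Fin n,
    -(d j) * zbR j
    + (∑ k, (aR j k * fR k (zbR k) (zbI k) - aI j k * fI k (zbR k) (zbI k)))
    + (∑ k, (bR j k * gR k (zbR k) (zbI k) - bI j k * gI k (zbR k) (zbI k)))
    + uR j = 0) ∧
  (∀ j : Fin n,
    -(d j) * zbI j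
    + (∑ k, (aR j k * fI k (zbR k) (zbI k) + aI j k * fR k (zbR k) (zbI k)))
    + (∑ k, (bR j k * gI k (zbR k) (zbI k) + bI j k * gR k (zbR k) (zbI k)))
    + uI j = 0)

/-- Condition H1: continuously differentiable with positive, bounded partial
derivatives. -/
def CondH1 (f1 f2 : ℝ → ℝ → ℝ) (lRR lRI lIR lII : ℝ) : Prop :=
  ContDiff ℝ 1 (fun p : ℝ × ℝ => f1 p.1 p.2) ∧
  ContDiff ℝ 1 (fun p : ℝ × ℝ => f2 p.1 p.2) ∧
  (∀ x y : ℝ,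
    (0 < deriv (fun s => f1 s y) x ∧ deriv (fun s => f1 s y) x ≤ lRR) ∧
    (0 < deriv (fun s => f1 x s) y ∧ deriv (fun s => f1 x s) y ≤ lRI) ∧
    (0 < deriv (fun s => f2 s y) x ∧ deriv (fun s => f2 s y) x ≤ lIR) ∧
    (0 < deriv (fun s => f2 x s) y ∧ deriv (fun s => f2 x s) y ≤ lII))

/-- Condition H2: continuously differentiable with bounded partial derivatives. -/
def CondH2 (g1 g2 : ℝ → ℝ → ℝ) (mRR mRI mIR mII : ℝ) : Prop :=
  ContDiff ℝ 1 (fun p : ℝ × ℝ => g1 p.1 p.2) ∧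
  ContDiff ℝ 1 (fun p : ℝ × ℝ => g2 p.1 p.2) ∧
  (∀ x y : ℝ,
    |deriv (fun s => g1 s y) x| ≤ mRR ∧
    |deriv (fun s => g1 x s) y| ≤ mRI ∧
    |deriv (fun s => g2 s y) x| ≤ mIR ∧
    |deriv (fun s => g2 x s) y| ≤ mII)

/-!
For two solutions `z`, `w` put `x = zR - wR`, `y = zI - wI`. By the mean value theorem the
increments of `f` are combinations of `x` and `y` with slopes in `(0, λ]`, and those of `g` are
bounded by `μ |x| + μ |y|`. Hence the upper right derivative of
`W = ∑ ξ_l |x_l| + φ_l |y_l|` is at most `∑ rateR_l |x_l| + rateI_l |y_l|` plus delayed terms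
with gains `gainR`, `gainI`, and conditions (i), (ii) say exactly that every rate plus the
corresponding column sum of gains is negative. For small `δ > 0` the Lyapunov–Krasovskii
functional `exp (δ t) W(t) + ∑ gain · exp (δ τ) ∫_{t-τ}^t exp (δ s) |x(s)| ds` is then
nonincreasing, so any two solutions approach each other at an exponential rate.
Applied to a solution and its time shifts this makes the solution converge, and its limit is an
equilibrium since the derivative must tend to `0`; applied to two equilibria it gives
uniqueness, and applied to a solution and the equilibrium it gives the estimate.
-/

open Filter Set Real Topology

lemma exists_sub_eq_deriv_mul_sub {g : ℝ → ℝ} (hg : Differentiable ℝ g) (a c : ℝ) :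
    ∃ x, g a - g c = deriv g x * (a - c) := by
  rcases lt_trichotomy c a with h | h | h
  · obtain ⟨x, -, hx⟩ := exists_deriv_eq_slope g h hg.continuous.continuousOn hg.differentiableOn
    exact ⟨x, by rw [hx, div_mul_cancel₀ _ (sub_ne_zero.2 h.ne')]⟩
  · exact ⟨a, by simp [h]⟩
  · obtain ⟨x, -, hx⟩ := exists_deriv_eq_slope g h hg.continuous.continuousOn hg.differentiableOn
    refine ⟨x, ?_⟩
    rw [hx, ← neg_sub c a, mul_neg, div_mul_cancel₀ _ (sub_ne_zero.2 h.ne'), neg_sub]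

lemma exists_sub_eq_partialDeriv {f : ℝ → ℝ → ℝ}
    (hf : ContDiff ℝ 1 (fun p : ℝ × ℝ => f p.1 p.2)) (a b c e : ℝ) :
    ∃ x y, f a b - f c e =
      deriv (fun s => f s b) x * (a - c) + deriv (fun s => f c s) y * (b - e) := by
  have hdiff := hf.differentiable one_ne_zero
  obtain ⟨x, hx⟩ := exists_sub_eq_deriv_mul_sub
    (hdiff.comp (differentiable_id.prodMk (differentiable_const b))) a c
  obtain ⟨y, hy⟩ := exists_sub_eq_deriv_mul_sub
    (hdiff.comp ((differentiable_const c).prodMk differentiable_id)) b e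
  exact ⟨x, y, by rw [← sub_add_sub_cancel _ (f c b)]; exact congrArg₂ (· + ·) hx hy⟩

lemma abs_sub_le_of_abs_partialDeriv_le {f : ℝ → ℝ → ℝ}
    (hf : ContDiff ℝ 1 (fun p : ℝ × ℝ => f p.1 p.2)) {M₁ M₂ : ℝ}
    (h₁ : ∀ x y, |deriv (fun s => f s y) x| ≤ M₁) (h₂ : ∀ x y, |deriv (fun s => f x s) y| ≤ M₂)
    (a b c e : ℝ) : |f a b - f c e| ≤ M₁ * |a - c| + M₂ * |b - e| := by
  obtain ⟨x, y, hxy⟩ := exists_sub_eq_partialDeriv hf a b c e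
  rw [hxy]
  refine (abs_add_le _ _).trans (add_le_add ?_ ?_) <;> rw [abs_mul] <;>
    exact mul_le_mul_of_nonneg_right (by apply_assumption) (abs_nonneg _)

lemma HasDerivAt.exists_hasDerivWithinAt_abs_Ici {x : ℝ → ℝ} {D t : ℝ}
    (hx : HasDerivAt x D t) :
    ∃ s : ℝ, |s| = 1 ∧ s * x t = |x t| ∧
      HasDerivWithinAt (fun u => |x u|) (s * D) (Ici t) t := by
  rcases lt_trichotomy (x t) 0 with hneg | h0 | hpos
  · refine ⟨-1, by simp, by rw [abs_of_neg hneg]; ring, ?_⟩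
    have hev : (fun u => |x u|) =ᶠ[𝓝 t] fun u => -1 * x u := by
      filter_upwards [hx.continuousAt.preimage_mem_nhds (Iio_mem_nhds hneg)] with u hu
      rw [abs_of_neg hu]; ring
    exact ((hx.const_mul (-1)).congr_of_eventuallyEq hev).hasDerivWithinAt
  · refine ⟨if 0 ≤ D then 1 else -1, by split_ifs <;> simp, by simp [h0], ?_⟩
    have hsD : (if 0 ≤ D then (1 : ℝ) else -1) * D = |D| := by
      split_ifs with h
      · rw [abs_of_nonneg h, one_mul]
      · rw [abs_of_neg (not_le.1 h)]; ring
    -- to the right of a zero of `x`, the slopes of `|x|` are the absolute values of those of `x`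
    rw [hsD, ← hasDerivWithinAt_Ioi_iff_Ici, hasDerivWithinAt_iff_tendsto_slope,
      sdiff_singleton_eq_self Set.self_notMem_Ioi]
    have hslope := hasDerivWithinAt_iff_tendsto_slope.1 (hx.hasDerivWithinAt (s := Ioi t))
    rw [sdiff_singleton_eq_self Set.self_notMem_Ioi] at hslope
    refine hslope.abs.congr' ?_
    filter_upwards [self_mem_nhdsWithin] with u hu
    rw [slope_def_field, slope_def_field, h0, abs_zero, sub_zero, sub_zero, abs_div,
      abs_of_pos (sub_pos.2 hu)]
  · refine ⟨1, by simp, by rw [abs_of_pos hpos, one_mul], ?_⟩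
    have hev : (fun u => |x u|) =ᶠ[𝓝 t] fun u => 1 * x u := by
      filter_upwards [hx.continuousAt.preimage_mem_nhds (Ioi_mem_nhds hpos)] with u hu
      rw [abs_of_pos hu, one_mul]
    exact ((hx.const_mul 1).congr_of_eventuallyEq hev).hasDerivWithinAt

lemma eq_zero_of_tendsto_deriv {z : ℝ → ℝ} (hz : Differentiable ℝ z) {L E : ℝ}
    (hL : Tendsto z atTop (𝓝 L)) (hE : Tendsto (deriv z) atTop (𝓝 E)) : E = 0 := by
  choose c hc hcd using fun t : ℝ =>
    exists_deriv_eq_slope z (lt_add_one t) hz.continuous.continuousOn hz.differentiableOn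
  have hc_top : Tendsto c atTop atTop := tendsto_atTop_mono (fun t => (hc t).1.le) tendsto_id
  have hslope : Tendsto (fun t => deriv z (c t)) atTop (𝓝 (L - L)) := by
    simp_rw [hcd, add_sub_cancel_left, div_one]
    exact (hL.comp (tendsto_atTop_add_const_right _ 1 tendsto_id)).sub hL
  simpa using tendsto_nhds_unique (hE.comp hc_top) hslope

lemma exists_tendsto_of_abs_sub_le_mul_exp {z : ℝ → ℝ} {C δ : ℝ} (hδ : 0 < δ)
    (h : ∀ s ∈ Icc (0 : ℝ) 1, ∀ t, 0 ≤ t → |z (t + s) - z t| ≤ C * exp (-δ * t)) :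
    ∃ L, Tendsto z atTop (𝓝 L) := by
  have hexp : ∀ m : ℕ, exp (-δ * m) = exp (-δ) ^ m := fun m => by
    rw [← Real.exp_nat_mul]; ring_nf
  obtain ⟨L, hL⟩ := cauchySeq_tendsto_of_complete <|
    cauchySeq_of_le_geometric (exp (-δ)) C (Real.exp_lt_one_iff.2 (neg_lt_zero.2 hδ))
      (f := fun m : ℕ => z m) fun m => by
        rw [dist_comm, Real.dist_eq, ← hexp]
        simpa using h 1 ⟨zero_le_one, le_rfl⟩ m m.cast_nonneg
  have hfrac : Tendsto (fun t : ℝ => z t - z ⌊t⌋₊) atTop (𝓝 0) := by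
    refine squeeze_zero_norm' (a := fun t => C * exp (-δ * ⌊t⌋₊)) ?_ ?_
    · filter_upwards [eventually_ge_atTop 0] with t ht
      have hs : t - ⌊t⌋₊ ∈ Icc (0 : ℝ) 1 :=
        ⟨sub_nonneg.2 (Nat.floor_le ht), by linarith [Nat.lt_floor_add_one t]⟩
      simpa using h _ hs ⌊t⌋₊ (Nat.cast_nonneg _)
    · have hfloor : Tendsto (fun t : ℝ => (⌊t⌋₊ : ℝ)) atTop atTop :=
        tendsto_natCast_atTop_atTop.comp tendsto_nat_floor_atTop
      simpa using (tendsto_exp_atBot.comp (tendsto_neg_atTop_atBot.comp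
        (hfloor.const_mul_atTop hδ))).const_mul C
  exact ⟨L, by simpa using (hL.comp tendsto_nat_floor_atTop).add hfrac⟩

lemma le_zero_of_forall_le_mul_exp {a C δ : ℝ} (hδ : 0 < δ)
    (h : ∀ t, 0 ≤ t → a ≤ C * exp (-δ * t)) : a ≤ 0 := by
  have hlim : Tendsto (fun t => C * exp (-δ * t)) atTop (𝓝 0) := by
    simpa using (tendsto_exp_atBot.comp (tendsto_neg_atTop_atBot.comp
      (tendsto_id.const_mul_atTop hδ))).const_mul C
  exact ge_of_tendsto hlim ((eventually_ge_atTop 0).mono h)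

lemma exists_pos_le_of_forall_pos {ι : Type*} [Finite ι] {w : ι → ℝ} (hw : ∀ i, 0 < w i) :
    ∃ m, 0 < m ∧ ∀ i, m ≤ w i := by
  cases isEmpty_or_nonempty ι
  · exact ⟨1, one_pos, isEmptyElim⟩
  · obtain ⟨i₀, hi₀⟩ := Finite.exists_min w
    exact ⟨w i₀, hw i₀, hi₀⟩

lemma exists_forall_abs_le_on_Icc {ι : Type*} [Fintype ι] {f : ι → ℝ → ℝ}
    (hf : ∀ i, Continuous (f i)) (a b : ℝ) : ∃ M, ∀ i, ∀ u ∈ Icc a b, |f i u| ≤ M := by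
  obtain ⟨M, hM⟩ := isCompact_Icc.exists_bound_of_continuousOn
    (continuous_pi fun i => hf i).continuousOn (s := Icc a b)
  exact ⟨M, fun i u hu => (norm_le_pi_norm (fun i => f i u) i).trans (hM u hu)⟩

lemma le_of_hasDerivWithinAt_Ici_nonpos {V : ℝ → ℝ} (hV : Continuous V)
    (hD : ∀ t, 0 ≤ t → ∃ D ≤ 0, HasDerivWithinAt V D (Ici t) t) {t : ℝ} (ht : 0 ≤ t) :
    V t ≤ V 0 :=
  image_le_of_liminf_slope_right_le_deriv_boundary (B := fun _ => V 0) (B' := 0)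
    hV.continuousOn le_rfl continuousOn_const (fun _ _ => hasDerivWithinAt_const _ _ _)
    (fun x hx _ hr => by
      obtain ⟨D, hD0, hDV⟩ := hD x hx.1
      exact hDV.liminf_right_slope_le (hD0.trans_lt hr))
    ⟨ht, le_rfl⟩

lemma hasDerivAt_integral_sub_const {f : ℝ → ℝ} (hf : Continuous f) (c t : ℝ) :
    HasDerivAt (fun u => ∫ s in (u - c)..u, f s) (f t - f (t - c)) t := by
  have hF : ∀ b, HasDerivAt (fun u => ∫ s in (0 : ℝ)..u, f s) (f b) b :=
    fun b => (hf.integral_hasStrictDerivAt 0 b).hasDerivAt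
  have heq : (fun u => ∫ s in (u - c)..u, f s) =
      fun u => (∫ s in (0 : ℝ)..u, f s) - ∫ s in (0 : ℝ)..(u - c), f s := by
    funext u
    rw [intervalIntegral.integral_interval_sub_left (hf.intervalIntegrable _ _)
      (hf.intervalIntegrable _ _)]
  rw [heq]
  exact ((hF t).sub ((hF (t - c)).comp t ((hasDerivAt_id' t).sub_const c))).congr_deriv
    (by rw [mul_one])

lemma sqrt_sum_sq_add_sum_sq_le {n : ℕ} {x y : Fin n → ℝ} {E : ℝ}
    (h : ∀ j, |x j| ≤ E ∧ |y j| ≤ E) :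
    √((∑ j, x j ^ 2) + ∑ j, y j ^ 2) ≤ √(2 * n) * |E| := by
  rw [← Real.sqrt_sq (abs_nonneg E), ← Real.sqrt_mul (by positivity)]
  refine Real.sqrt_le_sqrt ?_
  have hsq : ∀ {a : ℝ}, |a| ≤ E → a ^ 2 ≤ |E| ^ 2 := fun {a} ha => by
    simpa only [sq_abs] using pow_le_pow_left₀ (abs_nonneg a) (ha.trans (le_abs_self E)) 2
  calc (∑ j, x j ^ 2) + ∑ j, y j ^ 2 ≤ (∑ _j : Fin n, |E| ^ 2) + ∑ _j : Fin n, |E| ^ 2 :=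
        add_le_add (sum_le_sum fun j _ => hsq (h j).1) (sum_le_sum fun j _ => hsq (h j).2)
    _ = 2 * n * |E| ^ 2 := by simp; ring

section DelayedLyapunov

variable {ι κ : Type*} [Fintype ι] [Fintype κ] (w c : ι → ℝ) (r τ : κ → ι → ℝ) (δ : ℝ)
  (v : ι → ℝ → ℝ)

/-- Lyapunov–Krasovskii functional. Differentiating its integral terms cancels the delayed terms
of the derivative bound, at the price of the terms `r k i * exp (δ * τ k i) * v i t`. -/
noncomputable def lyapunovFunctional (t : ℝ) : ℝ :=
  exp (δ * t) * ∑ i, w i * v i t +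
    ∑ k, ∑ i, r k i * exp (δ * τ k i) * ∫ s in (t - τ k i)..t, exp (δ * s) * v i s

variable {w c r τ δ v}

lemma continuous_lyapunovFunctional (hv : ∀ i, Continuous (v i)) :
    Continuous (lyapunovFunctional w r τ δ v) := by
  have hint : ∀ k i, Continuous fun t => ∫ s in (t - τ k i)..t, exp (δ * s) * v i s :=
    fun k i => continuous_iff_continuousAt.2 fun t =>
      (hasDerivAt_integral_sub_const (by fun_prop) _ t).continuousAt
  unfold lyapunovFunctional
  fun_prop

lemma exp_mul_le_lyapunovFunctional (hr : ∀ k i, 0 ≤ r k i) (hτ : ∀ k i, 0 ≤ τ k i)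
    (hv₀ : ∀ i t, 0 ≤ v i t) (t : ℝ) :
    exp (δ * t) * ∑ i, w i * v i t ≤ lyapunovFunctional w r τ δ v t := by
  refine le_add_of_nonneg_right (sum_nonneg fun k _ => sum_nonneg fun i _ => ?_)
  refine mul_nonneg (by have := hr k i; positivity) ?_
  exact intervalIntegral.integral_nonneg (by linarith [hτ k i])
    fun s _ => mul_nonneg (exp_pos _).le (hv₀ i s)

lemma lyapunovFunctional_zero_le (hw : ∀ i, 0 ≤ w i) (hr : ∀ k i, 0 ≤ r k i)
    (hτ : ∀ k i, 0 ≤ τ k i) (hδ : 0 ≤ δ) (hv : ∀ i, Continuous (v i)) (hv₀ : ∀ i t, 0 ≤ v i t)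
    {T K : ℝ} (hT : 0 ≤ T) (hτT : ∀ k i, τ k i ≤ T) (hK : ∀ i, ∀ u ∈ Icc (-T) 0, v i u ≤ K) :
    lyapunovFunctional w r τ δ v 0 ≤
      (∑ i, w i + ∑ k, ∑ i, r k i * exp (δ * τ k i) * τ k i) * K := by
  have hint : ∀ k i, ∫ s in (0 - τ k i)..0, exp (δ * s) * v i s ≤ τ k i * K := fun k i => by
    have hmono := intervalIntegral.integral_mono_on (a := 0 - τ k i) (b := 0)
      (by linarith [hτ k i])
      ((by fun_prop : Continuous fun s => exp (δ * s) * v i s).intervalIntegrable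
        (μ := MeasureTheory.volume) _ _)
      intervalIntegrable_const (g := fun _ => K) fun s hs => ?_
    · simpa using hmono
    · have hvs := hK i s ⟨by linarith [hs.1, hτT k i], hs.2⟩
      calc exp (δ * s) * v i s ≤ 1 * v i s := by
            gcongr
            · exact hv₀ i s
            · exact exp_le_one_iff.2 (mul_nonpos_of_nonneg_of_nonpos hδ hs.2)
        _ ≤ K := by linarith
  have hW : ∑ i, w i * v i 0 ≤ ∑ i, w i * K :=
    sum_le_sum fun i _ => mul_le_mul_of_nonneg_left (hK i 0 ⟨by linarith, le_rfl⟩) (hw i)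
  have hdelay : ∑ k, ∑ i, r k i * exp (δ * τ k i) * ∫ s in (0 - τ k i)..0, exp (δ * s) * v i s ≤
      ∑ k, ∑ i, r k i * exp (δ * τ k i) * (τ k i * K) :=
    sum_le_sum fun k _ => sum_le_sum fun i _ =>
      mul_le_mul_of_nonneg_left (hint k i) (by have := hr k i; positivity)
  calc lyapunovFunctional w r τ δ v 0
      ≤ ∑ i, w i * K + ∑ k, ∑ i, r k i * exp (δ * τ k i) * (τ k i * K) := by
        unfold lyapunovFunctional
        rw [mul_zero, exp_zero, one_mul]
        exact add_le_add hW hdelay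
    _ = _ := by simp only [add_mul, sum_mul, mul_assoc]

lemma lyapunovFunctional_hasDerivWithinAt (hv : ∀ i, Continuous (v i)) {t D : ℝ}
    (hD : HasDerivWithinAt (fun t => ∑ i, w i * v i t) D (Ici t) t) :
    HasDerivWithinAt (lyapunovFunctional w r τ δ v)
      (exp (δ * t) * (δ * ∑ i, w i * v i t + D +
        ∑ k, ∑ i, r k i * (exp (δ * τ k i) * v i t - v i (t - τ k i)))) (Ici t) t := by
  have hexp : HasDerivAt (fun t => exp (δ * t)) (exp (δ * t) * δ) t := by
    simpa using ((hasDerivAt_id' t).const_mul δ).exp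
  have hsum := HasDerivAt.fun_sum (u := Finset.univ) fun k _ =>
    HasDerivAt.fun_sum (u := Finset.univ) fun i _ =>
    (hasDerivAt_integral_sub_const (by fun_prop : Continuous fun s => exp (δ * s) * v i s)
      (τ k i) t).const_mul (r k i * exp (δ * τ k i))
  refine ((hexp.hasDerivWithinAt.mul hD).add hsum.hasDerivWithinAt).congr_deriv ?_
  have hshift : ∀ k i, exp (δ * τ k i) * exp (δ * (t - τ k i)) = exp (δ * t) := fun k i => by
    rw [← exp_add]; ring_nf
  simp only [mul_add, mul_sum]
  congr 1
  · simp only [mul_assoc]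
  · refine sum_congr rfl fun k _ => sum_congr rfl fun i _ => ?_
    linear_combination (-(r k i * v i (t - τ k i))) * hshift k i

theorem sum_mul_le_mul_exp_of_hasDerivWithinAt_le (hw : ∀ i, 0 ≤ w i) (hr : ∀ k i, 0 ≤ r k i)
    (hτ : ∀ k i, 0 ≤ τ k i) (hδ : 0 ≤ δ)
    (hrate : ∀ i, δ * w i + c i + ∑ k, r k i * exp (δ * τ k i) ≤ 0)
    (hv : ∀ i, Continuous (v i)) (hv₀ : ∀ i t, 0 ≤ v i t)
    (hD : ∀ t, 0 ≤ t → ∃ D, HasDerivWithinAt (fun t => ∑ i, w i * v i t) D (Ici t) t ∧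
      D ≤ ∑ i, c i * v i t + ∑ k, ∑ i, r k i * v i (t - τ k i))
    {T K : ℝ} (hT : 0 ≤ T) (hτT : ∀ k i, τ k i ≤ T) (hK : ∀ i, ∀ u ∈ Icc (-T) 0, v i u ≤ K)
    {t : ℝ} (ht : 0 ≤ t) :
    ∑ i, w i * v i t ≤
      (∑ i, w i + ∑ k, ∑ i, r k i * exp (δ * τ k i) * τ k i) * K * exp (-δ * t) := by
  have hdecr : ∀ t, 0 ≤ t →
      ∃ D' ≤ 0, HasDerivWithinAt (lyapunovFunctional w r τ δ v) D' (Ici t) t := by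
    intro t ht
    obtain ⟨D, hDW, hDle⟩ := hD t ht
    refine ⟨_, mul_nonpos_of_nonneg_of_nonpos (exp_pos _).le ?_,
      lyapunovFunctional_hasDerivWithinAt hv hDW⟩
    have hexpand : ∑ i, (δ * w i + c i + ∑ k, r k i * exp (δ * τ k i)) * v i t =
        δ * ∑ i, w i * v i t + ∑ i, c i * v i t +
          ∑ k, ∑ i, r k i * (exp (δ * τ k i) * v i t) := by
      rw [sum_comm (s := univ) (t := univ)]
      simp only [add_mul, sum_add_distrib, mul_sum, sum_mul, mul_assoc]
    have hsplit : ∑ k, ∑ i, r k i * (exp (δ * τ k i) * v i t - v i (t - τ k i)) =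
        ∑ k, ∑ i, r k i * (exp (δ * τ k i) * v i t) - ∑ k, ∑ i, r k i * v i (t - τ k i) := by
      simp only [mul_sub, sum_sub_distrib]
    have hrate_t : ∑ i, (δ * w i + c i + ∑ k, r k i * exp (δ * τ k i)) * v i t ≤ 0 :=
      sum_nonpos fun i _ => mul_nonpos_of_nonpos_of_nonneg (hrate i) (hv₀ i t)
    linarith
  have hV := (exp_mul_le_lyapunovFunctional (w := w) hr hτ hv₀ t).trans <|
    (le_of_hasDerivWithinAt_Ici_nonpos (continuous_lyapunovFunctional hv) hdecr ht).trans <|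
      lyapunovFunctional_zero_le hw hr hτ hδ hv hv₀ hT hτT hK
  calc ∑ i, w i * v i t = exp (-δ * t) * (exp (δ * t) * ∑ i, w i * v i t) := by
        rw [← mul_assoc, ← exp_add]; simp
    _ ≤ exp (-δ * t) * ((∑ i, w i + ∑ k, ∑ i, r k i * exp (δ * τ k i) * τ k i) * K) := by
        gcongr
    _ = _ := by ring

lemma exists_pos_decayRate (hc : ∀ i, c i + ∑ k, r k i < 0) :
    ∃ δ > 0, ∀ i, δ * w i + c i + ∑ k, r k i * exp (δ * τ k i) ≤ 0 := by
  have hev : ∀ᶠ δ in 𝓝 (0 : ℝ), ∀ i, δ * w i + c i + ∑ k, r k i * exp (δ * τ k i) < 0 :=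
    eventually_all.2 fun i => (by fun_prop : Continuous fun δ : ℝ =>
      δ * w i + c i + ∑ k, r k i * exp (δ * τ k i)).continuousAt.eventually_lt
        continuousAt_const (by simpa using hc i)
  obtain ⟨δ, hδ, hδ₀⟩ := ((hev.filter_mono nhdsWithin_le_nhds).and self_mem_nhdsWithin :
    ∀ᶠ δ in 𝓝[>] (0 : ℝ), _ ∧ δ ∈ Set.Ioi 0).exists
  exact ⟨δ, hδ₀, fun i => (hδ i).le⟩

end DelayedLyapunov

theorem exists_decay_of_hasDerivWithinAt_le {ι κ : Type*} [Fintype ι] [Fintype κ]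
    {w c : ι → ℝ} {r τ : κ → ι → ℝ} (hw : ∀ i, 0 < w i) (hr : ∀ k i, 0 ≤ r k i)
    (hτ : ∀ k i, 0 ≤ τ k i) (hc : ∀ i, c i + ∑ k, r k i < 0) {T : ℝ} (hT : 0 ≤ T)
    (hτT : ∀ k i, τ k i ≤ T) :
    ∃ δ > 0, ∃ A, ∀ v : ι → ℝ → ℝ, (∀ i, Continuous (v i)) → (∀ i t, 0 ≤ v i t) →
      (∀ t, 0 ≤ t → ∃ D, HasDerivWithinAt (fun t => ∑ i, w i * v i t) D (Ici t) t ∧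
        D ≤ ∑ i, c i * v i t + ∑ k, ∑ i, r k i * v i (t - τ k i)) →
      ∀ K, (∀ i, ∀ u ∈ Icc (-T) 0, v i u ≤ K) → ∀ i t, 0 ≤ t → v i t ≤ A * K * exp (-δ * t) := by
  obtain ⟨δ, hδ, hrate⟩ := exists_pos_decayRate (w := w) (τ := τ) hc
  obtain ⟨m, hm, hmw⟩ := exists_pos_le_of_forall_pos hw
  refine ⟨δ, hδ, (∑ i, w i + ∑ k, ∑ i, r k i * exp (δ * τ k i) * τ k i) / m,
    fun v hv hv₀ hD K hK i t ht => ?_⟩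
  have hsum := sum_mul_le_mul_exp_of_hasDerivWithinAt_le (fun i => (hw i).le) hr hτ hδ.le hrate
    hv hv₀ hD hT hτT hK ht
  have hi : m * v i t ≤ ∑ i, w i * v i t :=
    (mul_le_mul_of_nonneg_right (hmw i) (hv₀ i t)).trans
      (single_le_sum (fun j _ => mul_nonneg (hw j).le (hv₀ j t)) (mem_univ i))
  rw [div_mul_eq_mul_div, div_mul_eq_mul_div, le_div_iff₀ hm]
  linarith

section Coefficients

variable {n : ℕ}

/-- The brackets `[⋯]⁺` of conditions (i) and (ii) are `max (columnBound ⋯) 0`. -/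
def columnBound (w v : Fin n → ℝ) (A B : Fin n → Fin n → ℝ) (l : Fin n) : ℝ :=
  w l * A l l + (∑ j ∈ univ.erase l, w j * |A j l|) + ∑ j, v j * |B j l|

lemma sum_mul_le_columnBound {w v p e : Fin n → ℝ} (hw : ∀ k, 0 ≤ w k) (hv : ∀ k, 0 ≤ v k)
    (hp : ∀ k, |p k| = 1) (he : ∀ k, |e k| = 1) (A B : Fin n → Fin n → ℝ) (l : Fin n) :
    (∑ k, (w k * p k * A k l + v k * e k * B k l)) * p l ≤ columnBound w v A B l := by
  have hterm : ∀ {a s s' x : ℝ}, 0 ≤ a → |s| = 1 → |s'| = 1 → a * s * x * s' ≤ a * |x| :=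
    fun {a s s' x} ha hs hs' => by
      simpa [abs_mul, hs, hs', abs_of_nonneg ha] using le_abs_self (a * s * x * s')
  have hpl : p l * p l = 1 := by rw [← abs_mul_abs_self, hp l, one_mul]
  have hA : ∑ k, w k * p k * A k l * p l ≤ w l * A l l + ∑ k ∈ univ.erase l, w k * |A k l| := by
    rw [← add_sum_erase _ _ (mem_univ l)]
    exact add_le_add (by linear_combination (w l * A l l) * hpl)
      (sum_le_sum fun k _ => hterm (hw k) (hp k) (hp l))
  have hB : ∑ k, v k * e k * B k l * p l ≤ ∑ k, v k * |B k l| :=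
    sum_le_sum fun k _ => hterm (hv k) (he k) (hp l)
  calc (∑ k, (w k * p k * A k l + v k * e k * B k l)) * p l
      = ∑ k, w k * p k * A k l * p l + ∑ k, v k * e k * B k l * p l := by
        rw [sum_mul, ← sum_add_distrib]; simp only [add_mul]
    _ ≤ _ := add_le_add hA hB

lemma mul_le_max_mul {c B α L : ℝ} (hc : c ≤ B) (hα : 0 < α) (hαL : α ≤ L) :
    c * α ≤ max B 0 * L :=
  calc c * α ≤ max B 0 * α := mul_le_mul_of_nonneg_right (hc.trans (le_max_left _ _)) hα.le
    _ ≤ max B 0 * L := mul_le_mul_of_nonneg_left hαL (le_max_right _ _)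

variable (d ξ φ : Fin n → ℝ) (aR aI bR bI : Fin n → Fin n → ℝ)
  (lRR lRI lIR lII mRR mRI mIR mII : Fin n → ℝ)

/-- `rateR l + ∑ k, gainR k l` is the left side of condition (i) at index `l`, and
`rateI l + ∑ k, gainI k l` that of condition (ii). -/
def rateR (l : Fin n) : ℝ :=
  -(ξ l) * d l + max (columnBound ξ φ aR aI l) 0 * lRR l
    + max (columnBound ξ φ (-aI) aR l) 0 * lIR l

def rateI (l : Fin n) : ℝ :=
  -(φ l) * d l + max (columnBound φ ξ aR aI l) 0 * lII l
    + max (columnBound φ ξ aI aR l) 0 * lRI l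

def gainR (k l : Fin n) : ℝ :=
  ξ k * (|bR k l| * mRR l + |bI k l| * mIR l) + φ k * (|bR k l| * mIR l + |bI k l| * mRR l)

def gainI (k l : Fin n) : ℝ :=
  ξ k * (|bR k l| * mRI l + |bI k l| * mII l) + φ k * (|bR k l| * mII l + |bI k l| * mRI l)

variable {d ξ φ aR aI bR bI lRR lRI lIR lII mRR mRI mIR mII}

lemma gainR_nonneg (hξ : ∀ k, 0 ≤ ξ k) (hφ : ∀ k, 0 ≤ φ k) (hRR : ∀ l, 0 ≤ mRR l)
    (hIR : ∀ l, 0 ≤ mIR l) (k l : Fin n) : 0 ≤ gainR ξ φ bR bI mRR mIR k l := by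
  have := hξ k; have := hφ k; have := hRR l; have := hIR l
  unfold gainR; positivity

lemma gainI_nonneg (hξ : ∀ k, 0 ≤ ξ k) (hφ : ∀ k, 0 ≤ φ k) (hRI : ∀ l, 0 ≤ mRI l)
    (hII : ∀ l, 0 ≤ mII l) (k l : Fin n) : 0 ≤ gainI ξ φ bR bI mRI mII k l := by
  have := hξ k; have := hφ k; have := hRI l; have := hII l
  unfold gainI; positivity

end Coefficients

section PointwiseEstimate

variable {n : ℕ} {d ξ φ : Fin n → ℝ} {aR aI bR bI : Fin n → Fin n → ℝ}
  {lRR lRI lIR lII mRR mRI mIR mII : Fin n → ℝ}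

lemma columnBound_neg_right (w v : Fin n → ℝ) (A B : Fin n → Fin n → ℝ) (l : Fin n) :
    columnBound w v A (-B) l = columnBound w v A B l := by
  simp [columnBound]

lemma column_contribution_le (hξ : ∀ k, 0 ≤ ξ k) (hφ : ∀ k, 0 ≤ φ k) {s σ X Y : Fin n → ℝ}
    (hs : ∀ k, |s k| = 1) (hσ : ∀ k, |σ k| = 1) {l : Fin n} (hX : X l = s l * |X l|)
    (hY : Y l = σ l * |Y l|) {α β α' β' : ℝ} (hα : 0 < α ∧ α ≤ lRR l) (hβ : 0 < β ∧ β ≤ lRI l)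
    (hα' : 0 < α' ∧ α' ≤ lIR l) (hβ' : 0 < β' ∧ β' ≤ lII l) :
    (∑ k, (ξ k * s k * aR k l + φ k * σ k * aI k l)) * (α * X l + β * Y l)
      + (∑ k, (ξ k * s k * (-aI) k l + φ k * σ k * aR k l)) * (α' * X l + β' * Y l)
    ≤ (max (columnBound ξ φ aR aI l) 0 * lRR l + max (columnBound ξ φ (-aI) aR l) 0 * lIR l)
        * |X l|
      + (max (columnBound φ ξ aR aI l) 0 * lII l + max (columnBound φ ξ aI aR l) 0 * lRI l)
        * |Y l| := by
  set C := ∑ k, (ξ k * s k * aR k l + φ k * σ k * aI k l)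
  set C' := ∑ k, (ξ k * s k * (-aI) k l + φ k * σ k * aR k l)
  have hCs : C * s l ≤ columnBound ξ φ aR aI l := sum_mul_le_columnBound hξ hφ hs hσ aR aI l
  have hC's : C' * s l ≤ columnBound ξ φ (-aI) aR l :=
    sum_mul_le_columnBound hξ hφ hs hσ (-aI) aR l
  have hCσ : C * σ l ≤ columnBound φ ξ aI aR l := by
    rw [show C = ∑ k, (φ k * σ k * aI k l + ξ k * s k * aR k l) from
      sum_congr rfl fun k _ => add_comm _ _]
    exact sum_mul_le_columnBound hφ hξ hσ hs aI aR l
  have hC'σ : C' * σ l ≤ columnBound φ ξ aR aI l := by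
    rw [show C' = ∑ k, (φ k * σ k * aR k l + ξ k * s k * (-aI) k l) from
      sum_congr rfl fun k _ => add_comm _ _, ← columnBound_neg_right φ ξ aR aI]
    exact sum_mul_le_columnBound hφ hξ hσ hs aR (-aI) l
  have hXc : C * s l * α + C' * s l * α' ≤
      max (columnBound ξ φ aR aI l) 0 * lRR l + max (columnBound ξ φ (-aI) aR l) 0 * lIR l :=
    add_le_add (mul_le_max_mul hCs hα.1 hα.2) (mul_le_max_mul hC's hα'.1 hα'.2)
  have hYc : C * σ l * β + C' * σ l * β' ≤
      max (columnBound φ ξ aR aI l) 0 * lII l + max (columnBound φ ξ aI aR l) 0 * lRI l := by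
    linarith [mul_le_max_mul hCσ hβ.1 hβ.2, mul_le_max_mul hC'σ hβ'.1 hβ'.2]
  calc C * (α * X l + β * Y l) + C' * (α' * X l + β' * Y l)
      = (C * s l * α + C' * s l * α') * |X l| + (C * σ l * β + C' * σ l * β') * |Y l| := by
        linear_combination (C * α + C' * α') * hX + (C * β + C' * β') * hY
    _ ≤ _ := add_le_add (mul_le_mul_of_nonneg_right hXc (abs_nonneg _))
        (mul_le_mul_of_nonneg_right hYc (abs_nonneg _))

lemma sum_instantaneous_le (hξ : ∀ k, 0 ≤ ξ k) (hφ : ∀ k, 0 ≤ φ k) {s σ X Y P Q : Fin n → ℝ}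
    (hs : ∀ k, |s k| = 1) (hσ : ∀ k, |σ k| = 1) (hX : ∀ l, X l = s l * |X l|)
    (hY : ∀ l, Y l = σ l * |Y l|)
    (hP : ∀ l, ∃ α β, (0 < α ∧ α ≤ lRR l) ∧ (0 < β ∧ β ≤ lRI l) ∧ P l = α * X l + β * Y l)
    (hQ : ∀ l, ∃ α β, (0 < α ∧ α ≤ lIR l) ∧ (0 < β ∧ β ≤ lII l) ∧ Q l = α * X l + β * Y l) :
    ∑ k, (ξ k * s k * ∑ l, (aR k l * P l - aI k l * Q l)
        + φ k * σ k * ∑ l, (aR k l * Q l + aI k l * P l))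
    ≤ ∑ l, ((max (columnBound ξ φ aR aI l) 0 * lRR l
          + max (columnBound ξ φ (-aI) aR l) 0 * lIR l) * |X l|
        + (max (columnBound φ ξ aR aI l) 0 * lII l
          + max (columnBound φ ξ aI aR l) 0 * lRI l) * |Y l|) := by
  have hswap : ∑ k, (ξ k * s k * ∑ l, (aR k l * P l - aI k l * Q l)
        + φ k * σ k * ∑ l, (aR k l * Q l + aI k l * P l)) =
      ∑ l, ((∑ k, (ξ k * s k * aR k l + φ k * σ k * aI k l)) * P l
        + (∑ k, (ξ k * s k * (-aI) k l + φ k * σ k * aR k l)) * Q l) := by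
    simp only [mul_sum, sum_mul, ← sum_add_distrib]
    rw [sum_comm]
    exact sum_congr rfl fun l _ => sum_congr rfl fun k _ => by simp only [Pi.neg_apply]; ring
  rw [hswap]
  refine sum_le_sum fun l _ => ?_
  obtain ⟨α, β, hα, hβ, hPl⟩ := hP l
  obtain ⟨α', β', hα', hβ', hQl⟩ := hQ l
  rw [hPl, hQl]
  exact column_contribution_le hξ hφ hs hσ (hX l) (hY l) hα hβ hα' hβ'

lemma delayed_term_le {k l : Fin n} (hξ : 0 ≤ ξ k) (hφ : 0 ≤ φ k) {s σ gp gq xd yd : ℝ}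
    (hs : |s| = 1) (hσ : |σ| = 1) (hgp : |gp| ≤ mRR l * xd + mRI l * yd)
    (hgq : |gq| ≤ mIR l * xd + mII l * yd) :
    ξ k * (s * (bR k l * gp - bI k l * gq)) + φ k * (σ * (bR k l * gq + bI k l * gp)) ≤
      gainR ξ φ bR bI mRR mIR k l * xd + gainI ξ φ bR bI mRI mII k l * yd := by
  have hR : s * (bR k l * gp - bI k l * gq) ≤
      |bR k l| * (mRR l * xd + mRI l * yd) + |bI k l| * (mIR l * xd + mII l * yd) :=
    calc s * (bR k l * gp - bI k l * gq) ≤ |bR k l * gp - bI k l * gq| := by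
          simpa [abs_mul, hs] using le_abs_self (s * (bR k l * gp - bI k l * gq))
      _ ≤ |bR k l| * |gp| + |bI k l| * |gq| := by
          simpa only [abs_mul] using abs_sub (bR k l * gp) (bI k l * gq)
      _ ≤ _ := by gcongr
  have hI : σ * (bR k l * gq + bI k l * gp) ≤
      |bR k l| * (mIR l * xd + mII l * yd) + |bI k l| * (mRR l * xd + mRI l * yd) :=
    calc σ * (bR k l * gq + bI k l * gp) ≤ |bR k l * gq + bI k l * gp| := by
          simpa [abs_mul, hσ] using le_abs_self (σ * (bR k l * gq + bI k l * gp))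
      _ ≤ |bR k l| * |gq| + |bI k l| * |gp| := by
          simpa only [abs_mul] using abs_add_le (bR k l * gq) (bI k l * gp)
      _ ≤ _ := by gcongr
  calc ξ k * (s * (bR k l * gp - bI k l * gq)) + φ k * (σ * (bR k l * gq + bI k l * gp))
      ≤ ξ k * (|bR k l| * (mRR l * xd + mRI l * yd) + |bI k l| * (mIR l * xd + mII l * yd))
        + φ k * (|bR k l| * (mIR l * xd + mII l * yd) + |bI k l| * (mRR l * xd + mRI l * yd)) := by
        gcongr
    _ = _ := by unfold gainR gainI; ring

theorem weighted_derivative_le (hξ : ∀ k, 0 ≤ ξ k) (hφ : ∀ k, 0 ≤ φ k)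
    {s σ X Y P Q : Fin n → ℝ} {GP GQ XD YD : Fin n → Fin n → ℝ}
    (hs : ∀ k, |s k| = 1) (hsX : ∀ k, s k * X k = |X k|)
    (hσ : ∀ k, |σ k| = 1) (hσY : ∀ k, σ k * Y k = |Y k|)
    (hP : ∀ l, ∃ α β, (0 < α ∧ α ≤ lRR l) ∧ (0 < β ∧ β ≤ lRI l) ∧ P l = α * X l + β * Y l)
    (hQ : ∀ l, ∃ α β, (0 < α ∧ α ≤ lIR l) ∧ (0 < β ∧ β ≤ lII l) ∧ Q l = α * X l + β * Y l)
    (hGP : ∀ k l, |GP k l| ≤ mRR l * XD k l + mRI l * YD k l)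
    (hGQ : ∀ k l, |GQ k l| ≤ mIR l * XD k l + mII l * YD k l) :
    ∑ k, ξ k * (s k * (-(d k) * X k + ∑ l, (aR k l * P l - aI k l * Q l)
        + ∑ l, (bR k l * GP k l - bI k l * GQ k l)))
      + ∑ k, φ k * (σ k * (-(d k) * Y k + ∑ l, (aR k l * Q l + aI k l * P l)
        + ∑ l, (bR k l * GQ k l + bI k l * GP k l)))
    ≤ ∑ l, rateR d ξ φ aR aI lRR lIR l * |X l| + ∑ l, rateI d ξ φ aR aI lRI lII l * |Y l|
      + ∑ k, (∑ l, gainR ξ φ bR bI mRR mIR k l * XD k l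
        + ∑ l, gainI ξ φ bR bI mRI mII k l * YD k l) := by
  have hsign : ∀ {a b : ℝ}, |a| = 1 → a * b = |b| → b = a * |b| := fun {a b} ha hab => by
    rw [← hab, ← mul_assoc, ← abs_mul_abs_self, ha, one_mul, one_mul]
  have hinst := sum_instantaneous_le (aR := aR) (aI := aI) hξ hφ hs hσ
    (fun l => hsign (hs l) (hsX l)) (fun l => hsign (hσ l) (hσY l)) hP hQ
  have hdelay : ∑ k, ∑ l, (ξ k * (s k * (bR k l * GP k l - bI k l * GQ k l))
        + φ k * (σ k * (bR k l * GQ k l + bI k l * GP k l))) ≤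
      ∑ k, (∑ l, gainR ξ φ bR bI mRR mIR k l * XD k l
        + ∑ l, gainI ξ φ bR bI mRI mII k l * YD k l) :=
    sum_le_sum fun k _ => by
      rw [← sum_add_distrib]
      exact sum_le_sum fun l _ =>
        delayed_term_le (hξ k) (hφ k) (hs k) (hσ k) (hGP k l) (hGQ k l)
  have hsplit : ∑ k, ξ k * (s k * (-(d k) * X k + ∑ l, (aR k l * P l - aI k l * Q l)
        + ∑ l, (bR k l * GP k l - bI k l * GQ k l)))
      + ∑ k, φ k * (σ k * (-(d k) * Y k + ∑ l, (aR k l * Q l + aI k l * P l)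
        + ∑ l, (bR k l * GQ k l + bI k l * GP k l))) =
      ∑ k, -(ξ k * d k) * |X k| + ∑ k, -(φ k * d k) * |Y k|
      + ∑ k, (ξ k * s k * ∑ l, (aR k l * P l - aI k l * Q l)
        + φ k * σ k * ∑ l, (aR k l * Q l + aI k l * P l))
      + ∑ k, ∑ l, (ξ k * (s k * (bR k l * GP k l - bI k l * GQ k l))
        + φ k * (σ k * (bR k l * GQ k l + bI k l * GP k l))) := by
    simp only [← sum_add_distrib]
    refine sum_congr rfl fun k _ => ?_
    rw [← hsX k, ← hσY k]
    simp only [sum_add_distrib, ← mul_sum]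
    ring
  have hrate : ∑ l, rateR d ξ φ aR aI lRR lIR l * |X l| + ∑ l, rateI d ξ φ aR aI lRI lII l * |Y l| =
      ∑ k, -(ξ k * d k) * |X k| + ∑ k, -(φ k * d k) * |Y k|
      + ∑ l, ((max (columnBound ξ φ aR aI l) 0 * lRR l
          + max (columnBound ξ φ (-aI) aR l) 0 * lIR l) * |X l|
        + (max (columnBound φ ξ aR aI l) 0 * lII l
          + max (columnBound φ ξ aI aR l) 0 * lRI l) * |Y l|) := by
    simp only [rateR, rateI, add_mul, sum_add_distrib, neg_mul]
    ring
  linarith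

end PointwiseEstimate

lemma CondH1.exists_re {f₁ f₂ : ℝ → ℝ → ℝ} {lRR lRI lIR lII : ℝ}
    (h : CondH1 f₁ f₂ lRR lRI lIR lII) (a b c e : ℝ) :
    ∃ α β, (0 < α ∧ α ≤ lRR) ∧ (0 < β ∧ β ≤ lRI) ∧
      f₁ a b - f₁ c e = α * (a - c) + β * (b - e) := by
  obtain ⟨x, y, hxy⟩ := exists_sub_eq_partialDeriv h.1 a b c e
  exact ⟨_, _, (h.2.2 x b).1, (h.2.2 c y).2.1, hxy⟩

lemma CondH1.exists_im {f₁ f₂ : ℝ → ℝ → ℝ} {lRR lRI lIR lII : ℝ}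
    (h : CondH1 f₁ f₂ lRR lRI lIR lII) (a b c e : ℝ) :
    ∃ α β, (0 < α ∧ α ≤ lIR) ∧ (0 < β ∧ β ≤ lII) ∧
      f₂ a b - f₂ c e = α * (a - c) + β * (b - e) := by
  obtain ⟨x, y, hxy⟩ := exists_sub_eq_partialDeriv h.2.1 a b c e
  exact ⟨_, _, (h.2.2 x b).2.2.1, (h.2.2 c y).2.2.2, hxy⟩

lemma CondH2.abs_sub_le_re {g₁ g₂ : ℝ → ℝ → ℝ} {mRR mRI mIR mII : ℝ}
    (h : CondH2 g₁ g₂ mRR mRI mIR mII) (a b c e : ℝ) :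
    |g₁ a b - g₁ c e| ≤ mRR * |a - c| + mRI * |b - e| :=
  abs_sub_le_of_abs_partialDeriv_le h.1 (fun x y => (h.2.2 x y).1) (fun x y => (h.2.2 x y).2.1)
    a b c e

lemma CondH2.abs_sub_le_im {g₁ g₂ : ℝ → ℝ → ℝ} {mRR mRI mIR mII : ℝ}
    (h : CondH2 g₁ g₂ mRR mRI mIR mII) (a b c e : ℝ) :
    |g₂ a b - g₂ c e| ≤ mIR * |a - c| + mII * |b - e| :=
  abs_sub_le_of_abs_partialDeriv_le h.2.1 (fun x y => (h.2.2 x y).2.2.1)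
    (fun x y => (h.2.2 x y).2.2.2) a b c e

lemma CondH2.nonneg {g₁ g₂ : ℝ → ℝ → ℝ} {mRR mRI mIR mII : ℝ}
    (h : CondH2 g₁ g₂ mRR mRI mIR mII) : 0 ≤ mRR ∧ 0 ≤ mRI ∧ 0 ≤ mIR ∧ 0 ≤ mII :=
  have h₀ := h.2.2 0 0
  ⟨(abs_nonneg _).trans h₀.1, (abs_nonneg _).trans h₀.2.1, (abs_nonneg _).trans h₀.2.2.1,
    (abs_nonneg _).trans h₀.2.2.2⟩

def increment {n : ℕ} (h : Fin n → ℝ → ℝ → ℝ) (zR zI wR wI : Fin n → ℝ → ℝ) (l : Fin n)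
    (t : ℝ) : ℝ :=
  h l (zR l t) (zI l t) - h l (wR l t) (wI l t)

section Network

variable {n : ℕ} {d : Fin n → ℝ} {aR aI bR bI τ : Fin n → Fin n → ℝ} {uR uI : Fin n → ℝ}
  {fR fI gR gI : Fin n → ℝ → ℝ → ℝ} {zR zI wR wI : Fin n → ℝ → ℝ}
  {lRR lRI lIR lII mRR mRI mIR mII ξ φ : Fin n → ℝ}

lemma IsSolution.hasDerivAt_sub_re (hz : IsSolution n d aR aI bR bI τ uR uI fR fI gR gI zR zI)
    (hw : IsSolution n d aR aI bR bI τ uR uI fR fI gR gI wR wI) (k : Fin n) {t : ℝ}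
    (ht : 0 ≤ t) :
    HasDerivAt (fun u => zR k u - wR k u)
      (-(d k) * (zR k t - wR k t)
        + ∑ l, (aR k l * increment fR zR zI wR wI l t - aI k l * increment fI zR zI wR wI l t)
        + ∑ l, (bR k l * increment gR zR zI wR wI l (t - τ k l)
          - bI k l * increment gI zR zI wR wI l (t - τ k l))) t := by
  refine (((hz.1 k).differentiable one_ne_zero t).hasDerivAt.sub
    ((hw.1 k).differentiable one_ne_zero t).hasDerivAt).congr_deriv ?_
  rw [hz.2.2.1 k t ht, hw.2.2.1 k t ht]
  simp only [increment, mul_sub, sum_sub_distrib]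
  ring

lemma IsSolution.hasDerivAt_sub_im (hz : IsSolution n d aR aI bR bI τ uR uI fR fI gR gI zR zI)
    (hw : IsSolution n d aR aI bR bI τ uR uI fR fI gR gI wR wI) (k : Fin n) {t : ℝ}
    (ht : 0 ≤ t) :
    HasDerivAt (fun u => zI k u - wI k u)
      (-(d k) * (zI k t - wI k t)
        + ∑ l, (aR k l * increment fI zR zI wR wI l t + aI k l * increment fR zR zI wR wI l t)
        + ∑ l, (bR k l * increment gI zR zI wR wI l (t - τ k l)
          + bI k l * increment gR zR zI wR wI l (t - τ k l))) t := by
  refine (((hz.2.1 k).differentiable one_ne_zero t).hasDerivAt.sub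
    ((hw.2.1 k).differentiable one_ne_zero t).hasDerivAt).congr_deriv ?_
  rw [hz.2.2.2 k t ht, hw.2.2.2 k t ht]
  simp only [increment, mul_sub, sum_add_distrib, sum_sub_distrib]
  ring

lemma exists_hasDerivWithinAt_weighted_abs_le
    (hz : IsSolution n d aR aI bR bI τ uR uI fR fI gR gI zR zI)
    (hw : IsSolution n d aR aI bR bI τ uR uI fR fI gR gI wR wI)
    (hf : ∀ j, CondH1 (fR j) (fI j) (lRR j) (lRI j) (lIR j) (lII j))
    (hg : ∀ j, CondH2 (gR j) (gI j) (mRR j) (mRI j) (mIR j) (mII j))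
    (hξ : ∀ k, 0 ≤ ξ k) (hφ : ∀ k, 0 ≤ φ k) {t : ℝ} (ht : 0 ≤ t) :
    ∃ D, HasDerivWithinAt
        (fun u => ∑ l, ξ l * |zR l u - wR l u| + ∑ l, φ l * |zI l u - wI l u|) D (Ici t) t ∧
      D ≤ ∑ l, rateR d ξ φ aR aI lRR lIR l * |zR l t - wR l t|
        + ∑ l, rateI d ξ φ aR aI lRI lII l * |zI l t - wI l t|
        + ∑ k, (∑ l, gainR ξ φ bR bI mRR mIR k l * |zR l (t - τ k l) - wR l (t - τ k l)|
          + ∑ l, gainI ξ φ bR bI mRI mII k l * |zI l (t - τ k l) - wI l (t - τ k l)|) := by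
  choose s hs hsX hsD using fun k =>
    (hz.hasDerivAt_sub_re hw k ht).exists_hasDerivWithinAt_abs_Ici
  choose σ hσ hσY hσD using fun k =>
    (hz.hasDerivAt_sub_im hw k ht).exists_hasDerivWithinAt_abs_Ici
  refine ⟨_, (HasDerivWithinAt.fun_sum fun k _ => (hsD k).const_mul (ξ k)).add
    (HasDerivWithinAt.fun_sum fun k _ => (hσD k).const_mul (φ k)), ?_⟩
  exact weighted_derivative_le hξ hφ hs hsX hσ hσY
    (fun l => (hf l).exists_re _ _ _ _) (fun l => (hf l).exists_im _ _ _ _)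
    (fun k l => (hg l).abs_sub_le_re _ _ _ _) (fun k l => (hg l).abs_sub_le_im _ _ _ _)

lemma IsSolution.comp_add_const (hz : IsSolution n d aR aI bR bI τ uR uI fR fI gR gI zR zI)
    {s : ℝ} (hs : 0 ≤ s) :
    IsSolution n d aR aI bR bI τ uR uI fR fI gR gI
      (fun j t => zR j (t + s)) (fun j t => zI j (t + s)) := by
  obtain ⟨hR, hI, hR', hI'⟩ := hz
  refine ⟨fun j => (hR j).comp (contDiff_id.add contDiff_const),
    fun j => (hI j).comp (contDiff_id.add contDiff_const), fun j t ht => ?_, fun j t ht => ?_⟩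
  · rw [deriv_comp_add_const, hR' j (t + s) (by linarith)]
    simp only [sub_add_eq_add_sub]
  · rw [deriv_comp_add_const, hI' j (t + s) (by linarith)]
    simp only [sub_add_eq_add_sub]

lemma IsEquilibrium.isSolution {vR vI : Fin n → ℝ}
    (hv : IsEquilibrium n d aR aI bR bI uR uI fR fI gR gI vR vI) :
    IsSolution n d aR aI bR bI τ uR uI fR fI gR gI (fun j _ => vR j) (fun j _ => vI j) :=
  ⟨fun _ => contDiff_const, fun _ => contDiff_const,
    fun j _ _ => by rw [deriv_const']; exact (hv.1 j).symm,
    fun j _ _ => by rw [deriv_const']; exact (hv.2 j).symm⟩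

lemma IsSolution.isEquilibrium_of_tendsto
    (hz : IsSolution n d aR aI bR bI τ uR uI fR fI gR gI zR zI)
    (hfR : ∀ k, Continuous fun p : ℝ × ℝ => fR k p.1 p.2)
    (hfI : ∀ k, Continuous fun p : ℝ × ℝ => fI k p.1 p.2)
    (hgR : ∀ k, Continuous fun p : ℝ × ℝ => gR k p.1 p.2)
    (hgI : ∀ k, Continuous fun p : ℝ × ℝ => gI k p.1 p.2) {LR LI : Fin n → ℝ}
    (hR : ∀ j, Tendsto (zR j) atTop (𝓝 (LR j))) (hI : ∀ j, Tendsto (zI j) atTop (𝓝 (LI j))) :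
    IsEquilibrium n d aR aI bR bI uR uI fR fI gR gI LR LI := by
  have hlim : ∀ h : Fin n → ℝ → ℝ → ℝ, (∀ k, Continuous fun p : ℝ × ℝ => h k p.1 p.2) →
      ∀ k {c : ℝ → ℝ}, Tendsto c atTop atTop →
        Tendsto (fun t => h k (zR k (c t)) (zI k (c t))) atTop (𝓝 (h k (LR k) (LI k))) :=
    fun h hh k c hc => ((hh k).tendsto (LR k, LI k)).comp
      (((hR k).comp hc).prodMk_nhds ((hI k).comp hc))
  have hdelay : ∀ j k, Tendsto (fun t => t - τ j k) atTop atTop := fun j k =>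
    (tendsto_atTop_add_const_right atTop (-τ j k) tendsto_id).congr
      fun t => (sub_eq_add_neg t _).symm
  refine ⟨fun j => eq_zero_of_tendsto_deriv ((hz.1 j).differentiable one_ne_zero) (hR j) ?_,
    fun j => eq_zero_of_tendsto_deriv ((hz.2.1 j).differentiable one_ne_zero) (hI j) ?_⟩
  · refine Tendsto.congr' ((eventually_ge_atTop 0).mono fun t ht => (hz.2.2.1 j t ht).symm) ?_
    exact ((((hR j).const_mul _).add (tendsto_finsetSum _ fun k _ =>
      ((hlim fR hfR k tendsto_id).const_mul _).sub ((hlim fI hfI k tendsto_id).const_mul _))).add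
      (tendsto_finsetSum _ fun k _ => ((hlim gR hgR k (hdelay j k)).const_mul _).sub
        ((hlim gI hgI k (hdelay j k)).const_mul _))).add tendsto_const_nhds
  · refine Tendsto.congr' ((eventually_ge_atTop 0).mono fun t ht => (hz.2.2.2 j t ht).symm) ?_
    exact ((((hI j).const_mul _).add (tendsto_finsetSum _ fun k _ =>
      ((hlim fI hfI k tendsto_id).const_mul _).add ((hlim fR hfR k tendsto_id).const_mul _))).add
      (tendsto_finsetSum _ fun k _ => ((hlim gI hgI k (hdelay j k)).const_mul _).add
        ((hlim gR hgR k (hdelay j k)).const_mul _))).add tendsto_const_nhds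

end Network

def HasExpDecay (n : ℕ) (d : Fin n → ℝ) (aR aI bR bI τ : Fin n → Fin n → ℝ) (uR uI : Fin n → ℝ)
    (fR fI gR gI : Fin n → ℝ → ℝ → ℝ) (δ A T : ℝ) : Prop :=
  ∀ zR zI wR wI : Fin n → ℝ → ℝ, IsSolution n d aR aI bR bI τ uR uI fR fI gR gI zR zI →
    IsSolution n d aR aI bR bI τ uR uI fR fI gR gI wR wI →
    ∀ K, (∀ j, ∀ u ∈ Icc (-T) 0, |zR j u - wR j u| ≤ K ∧ |zI j u - wI j u| ≤ K) →
    ∀ j t, 0 ≤ t → |zR j t - wR j t| ≤ A * K * exp (-δ * t) ∧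
      |zI j t - wI j t| ≤ A * K * exp (-δ * t)

section ExpDecay

variable {n : ℕ} {d : Fin n → ℝ} {aR aI bR bI τ : Fin n → Fin n → ℝ} {uR uI : Fin n → ℝ}
  {fR fI gR gI : Fin n → ℝ → ℝ → ℝ} {lRR lRI lIR lII mRR mRI mIR mII ξ φ : Fin n → ℝ}

theorem exists_hasExpDecay (hτ : ∀ j k, 0 ≤ τ j k)
    (hf : ∀ j, CondH1 (fR j) (fI j) (lRR j) (lRI j) (lIR j) (lII j))
    (hg : ∀ j, CondH2 (gR j) (gI j) (mRR j) (mRI j) (mIR j) (mII j))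
    (hξ : ∀ j, 0 < ξ j) (hφ : ∀ j, 0 < φ j)
    (hR : ∀ l, rateR d ξ φ aR aI lRR lIR l + ∑ k, gainR ξ φ bR bI mRR mIR k l < 0)
    (hI : ∀ l, rateI d ξ φ aR aI lRI lII l + ∑ k, gainI ξ φ bR bI mRI mII k l < 0) :
    ∃ δ > 0, ∃ A T, HasExpDecay n d aR aI bR bI τ uR uI fR fI gR gI δ A T := by
  have hm : ∀ l, 0 ≤ mRR l ∧ 0 ≤ mRI l ∧ 0 ≤ mIR l ∧ 0 ≤ mII l := fun l => (hg l).nonneg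
  have hT : 0 ≤ ∑ j, ∑ k, τ j k := sum_nonneg fun j _ => sum_nonneg fun k _ => hτ j k
  have hτT : ∀ j k, τ j k ≤ ∑ j, ∑ k, τ j k := fun j k =>
    (single_le_sum (fun k _ => hτ j k) (mem_univ k)).trans
      (single_le_sum (f := fun j => ∑ k, τ j k) (fun j _ => sum_nonneg fun k _ => hτ j k)
        (mem_univ j))
  obtain ⟨δ, hδ, A, hdecay⟩ := exists_decay_of_hasDerivWithinAt_le
    (w := Sum.elim ξ φ) (c := Sum.elim (rateR d ξ φ aR aI lRR lIR) (rateI d ξ φ aR aI lRI lII))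
    (r := fun k => Sum.elim (gainR ξ φ bR bI mRR mIR k) (gainI ξ φ bR bI mRI mII k))
    (τ := fun k => Sum.elim (τ k) (τ k))
    (by rintro (l | l); exacts [hξ l, hφ l])
    (by
      rintro k (l | l)
      · exact gainR_nonneg (fun k => (hξ k).le) (fun k => (hφ k).le) (fun l => (hm l).1)
          (fun l => (hm l).2.2.1) k l
      · exact gainI_nonneg (fun k => (hξ k).le) (fun k => (hφ k).le) (fun l => (hm l).2.1)
          (fun l => (hm l).2.2.2) k l)
    (by rintro k (l | l) <;> exact hτ k l)
    (by rintro (l | l); exacts [hR l, hI l])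
    hT (by rintro k (l | l) <;> exact hτT k l)
  refine ⟨δ, hδ, A, ∑ j, ∑ k, τ j k, fun zR zI wR wI hz hw K hK j t ht => ?_⟩
  have hv := hdecay (Sum.elim (fun l t => |zR l t - wR l t|) (fun l t => |zI l t - wI l t|))
    (by
      rintro (l | l)
      · exact (((hz.1 l).continuous).sub (hw.1 l).continuous).abs
      · exact (((hz.2.1 l).continuous).sub (hw.2.1 l).continuous).abs)
    (by rintro (l | l) t <;> exact abs_nonneg _)
    (fun t ht => by
      simpa only [Fintype.sum_sum_type, Sum.elim_inl, Sum.elim_inr] using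
        exists_hasDerivWithinAt_weighted_abs_le hz hw hf hg (fun k => (hξ k).le)
          (fun k => (hφ k).le) ht)
    K (by rintro (l | l) u hu; exacts [(hK l u hu).1, (hK l u hu).2])
  exact ⟨hv (Sum.inl j) t ht, hv (Sum.inr j) t ht⟩

variable {δ A T : ℝ}

lemma HasExpDecay.exists_abs_sub_le (h : HasExpDecay n d aR aI bR bI τ uR uI fR fI gR gI δ A T)
    {zR zI wR wI : Fin n → ℝ → ℝ} (hz : IsSolution n d aR aI bR bI τ uR uI fR fI gR gI zR zI)
    (hw : IsSolution n d aR aI bR bI τ uR uI fR fI gR gI wR wI) :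
    ∃ C, ∀ j t, 0 ≤ t →
      |zR j t - wR j t| ≤ C * exp (-δ * t) ∧ |zI j t - wI j t| ≤ C * exp (-δ * t) := by
  obtain ⟨MR, hMR⟩ := exists_forall_abs_le_on_Icc
    (fun j => (hz.1 j).continuous.sub (hw.1 j).continuous) (-T) 0
  obtain ⟨MI, hMI⟩ := exists_forall_abs_le_on_Icc
    (fun j => (hz.2.1 j).continuous.sub (hw.2.1 j).continuous) (-T) 0
  exact ⟨A * max MR MI, h zR zI wR wI hz hw (max MR MI) fun j u hu =>
    ⟨(hMR j u hu).trans (le_max_left _ _), (hMI j u hu).trans (le_max_right _ _)⟩⟩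

lemma HasExpDecay.exists_isEquilibrium
    (h : HasExpDecay n d aR aI bR bI τ uR uI fR fI gR gI δ A T) (hδ : 0 < δ)
    (hf : ∀ j, CondH1 (fR j) (fI j) (lRR j) (lRI j) (lIR j) (lII j))
    (hg : ∀ j, CondH2 (gR j) (gI j) (mRR j) (mRI j) (mIR j) (mII j))
    {zR zI : Fin n → ℝ → ℝ} (hz : IsSolution n d aR aI bR bI τ uR uI fR fI gR gI zR zI) :
    ∃ LR LI, IsEquilibrium n d aR aI bR bI uR uI fR fI gR gI LR LI := by
  obtain ⟨MR, hMR⟩ := exists_forall_abs_le_on_Icc (fun j => (hz.1 j).continuous) (-T) 1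
  obtain ⟨MI, hMI⟩ := exists_forall_abs_le_on_Icc (fun j => (hz.2.1 j).continuous) (-T) 1
  -- a solution and its shifts by `s ∈ [0, 1]` are `2 * max MR MI`-close on the history window,
  -- so the decay estimate makes the solution converge
  have hshift : ∀ s ∈ Icc (0 : ℝ) 1, ∀ j t, 0 ≤ t →
      |zR j (t + s) - zR j t| ≤ A * (2 * max MR MI) * exp (-δ * t) ∧
        |zI j (t + s) - zI j t| ≤ A * (2 * max MR MI) * exp (-δ * t) := fun s hs =>
    h _ _ _ _ (hz.comp_add_const hs.1) hz _ fun j u hu => by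
      have hu₀ : u ∈ Icc (-T) 1 := ⟨hu.1, hu.2.trans zero_le_one⟩
      have hu₁ : u + s ∈ Icc (-T) 1 := ⟨by linarith [hu.1, hs.1], by linarith [hu.2, hs.2]⟩
      constructor <;> refine (abs_sub _ _).trans ?_ <;>
        linarith [hMR j u hu₀, hMR j _ hu₁, hMI j u hu₀, hMI j _ hu₁, le_max_left MR MI,
          le_max_right MR MI]
  choose LR hLR using fun j =>
    exists_tendsto_of_abs_sub_le_mul_exp hδ fun s hs t ht => (hshift s hs j t ht).1
  choose LI hLI using fun j =>
    exists_tendsto_of_abs_sub_le_mul_exp hδ fun s hs t ht => (hshift s hs j t ht).2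
  exact ⟨LR, LI, hz.isEquilibrium_of_tendsto (fun k => (hf k).1.continuous)
    (fun k => (hf k).2.1.continuous) (fun k => (hg k).1.continuous)
    (fun k => (hg k).2.1.continuous) hLR hLI⟩

lemma HasExpDecay.eq_of_isEquilibrium
    (h : HasExpDecay n d aR aI bR bI τ uR uI fR fI gR gI δ A T) (hδ : 0 < δ)
    {vR vI wR wI : Fin n → ℝ} (hv : IsEquilibrium n d aR aI bR bI uR uI fR fI gR gI vR vI)
    (hw : IsEquilibrium n d aR aI bR bI uR uI fR fI gR gI wR wI) : vR = wR ∧ vI = wI := by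
  obtain ⟨C, hC⟩ := h.exists_abs_sub_le (hv.isSolution (τ := τ)) (hw.isSolution (τ := τ))
  have hzero : ∀ {a b : ℝ}, (∀ t, 0 ≤ t → |a - b| ≤ C * exp (-δ * t)) → a = b := fun hab =>
    sub_eq_zero.1 (abs_nonpos_iff.1 (le_zero_of_forall_le_mul_exp hδ hab))
  exact ⟨funext fun j => hzero fun t ht => (hC j t ht).1,
    funext fun j => hzero fun t ht => (hC j t ht).2⟩

lemma HasExpDecay.exists_sqrt_le (h : HasExpDecay n d aR aI bR bI τ uR uI fR fI gR gI δ A T)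
    {LR LI : Fin n → ℝ} (hL : IsEquilibrium n d aR aI bR bI uR uI fR fI gR gI LR LI)
    {zR zI : Fin n → ℝ → ℝ} (hz : IsSolution n d aR aI bR bI τ uR uI fR fI gR gI zR zI) :
    ∃ c, 0 < c ∧ ∀ t, 0 ≤ t →
      √((∑ j, (zR j t - LR j) ^ 2) + ∑ j, (zI j t - LI j) ^ 2) ≤ c * exp (-δ * t) := by
  obtain ⟨C, hC⟩ := h.exists_abs_sub_le hz (hL.isSolution (τ := τ))
  refine ⟨√(2 * n) * |C| + 1, by positivity, fun t ht => ?_⟩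
  calc _ ≤ √(2 * n) * |C * exp (-δ * t)| := sqrt_sum_sq_add_sum_sq_le fun j => hC j t ht
    _ = √(2 * n) * |C| * exp (-δ * t) := by rw [abs_mul, abs_of_pos (exp_pos _), mul_assoc]
    _ ≤ _ := by gcongr; linarith

end ExpDecay

theorem stmt4_general
    (n : ℕ)
    (d : Fin n → ℝ)
    (aR aI bR bI τ : Fin n → Fin n → ℝ) (hτ : ∀ j k, 0 ≤ τ j k)
    (uR uI : Fin n → ℝ)
    (fR fI gR gI : Fin n → ℝ → ℝ → ℝ)
    (lRR lRI lIR lII mRR mRI mIR mII : Fin n → ℝ)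
    (hf : ∀ j, CondH1 (fR j) (fI j) (lRR j) (lRI j) (lIR j) (lII j))
    (hg : ∀ j, CondH2 (gR j) (gI j) (mRR j) (mRI j) (mIR j) (mII j))
    (ξ φ : Fin n → ℝ) (hξ : ∀ j, 0 < ξ j) (hφ : ∀ j, 0 < φ j)
    (hT9 : ∀ k : Fin n,
      -(ξ k) * d k
      + max (ξ k * aR k k + (∑ j ∈ Finset.univ.erase k, ξ j * |aR j k|)
             + (∑ j, φ j * |aI j k|)) 0 * lRR k
      + max (-(ξ k * aI k k) + (∑ j ∈ Finset.univ.erase k, ξ j * |aI j k|)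
             + (∑ j, φ j * |aR j k|)) 0 * lIR k
      + (∑ j, (ξ j * (|bR j k| * mRR k + |bI j k| * mIR k)
               + φ j * (|bR j k| * mIR k + |bI j k| * mRR k))) < 0)
    (hT10 : ∀ k : Fin n,
      -(φ k) * d k
      + max (φ k * aR k k + (∑ j ∈ Finset.univ.erase k, φ j * |aR j k|)
             + (∑ j, ξ j * |aI j k|)) 0 * lII k
      + max (φ k * aI k k + (∑ j ∈ Finset.univ.erase k, φ j * |aI j k|)
             + (∑ j, ξ j * |aR j k|)) 0 * lRI k
      + (∑ j, (ξ j * (|bR j k| * mRI k + |bI j k| * mII k)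
               + φ j * (|bR j k| * mII k + |bI j k| * mRI k))) < 0)
    (hsol : ∃ zR zI, IsSolution n d aR aI bR bI τ uR uI fR fI gR gI zR zI) :
    ∃ zbR zbI : Fin n → ℝ,
      IsEquilibrium n d aR aI bR bI uR uI fR fI gR gI zbR zbI ∧
      (∀ wR wI : Fin n → ℝ,
        IsEquilibrium n d aR aI bR bI uR uI fR fI gR gI wR wI → wR = zbR ∧ wI = zbI) ∧
      (∀ zR zI : Fin n → ℝ → ℝ,
        IsSolution n d aR aI bR bI τ uR uI fR fI gR gI zR zI →
        ∃ c δ : ℝ, 0 < c ∧ 0 < δ ∧ ∀ t : ℝ, 0 ≤ t →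
          Real.sqrt ((∑ j, (zR j t - zbR j) ^ 2) + ∑ j, (zI j t - zbI j) ^ 2)
            ≤ c * Real.exp (-δ * t)) := by
  have hR : ∀ l, rateR d ξ φ aR aI lRR lIR l + ∑ k, gainR ξ φ bR bI mRR mIR k l < 0 :=
    fun l => by simpa [rateR, columnBound, gainR] using hT9 l
  have hI : ∀ l, rateI d ξ φ aR aI lRI lII l + ∑ k, gainI ξ φ bR bI mRI mII k l < 0 :=
    fun l => by simpa [rateI, columnBound, gainI] using hT10 l
  obtain ⟨δ, hδ, A, T, hdecay⟩ := exists_hasExpDecay hτ hf hg hξ hφ hR hI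
  obtain ⟨zR, zI, hz⟩ := hsol
  obtain ⟨LR, LI, hL⟩ := hdecay.exists_isEquilibrium hδ hf hg hz
  refine ⟨LR, LI, hL, fun wR wI hw => hdecay.eq_of_isEquilibrium hδ hw hL, fun zR zI hz => ?_⟩
  obtain ⟨c, hc, hbound⟩ := hdecay.exists_sqrt_le hL hz
  exact ⟨c, δ, hc, hδ, hbound⟩

theorem stmt4
    (n : ℕ) (hn : 1 ≤ n)
    (d : Fin n → ℝ) (hd : ∀ j, 0 < d j)
    (aR aI bR bI τ : Fin n → Fin n → ℝ) (hτ : ∀ j k, 0 ≤ τ j k)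
    (uR uI : Fin n → ℝ)
    (fR fI gR gI : Fin n → ℝ → ℝ → ℝ)
    (lRR lRI lIR lII mRR mRI mIR mII : Fin n → ℝ)
    (hl : ∀ j, 0 < lRR j ∧ 0 < lRI j ∧ 0 < lIR j ∧ 0 < lII j)
    (hm : ∀ j, 0 < mRR j ∧ 0 < mRI j ∧ 0 < mIR j ∧ 0 < mII j)
    (hf : ∀ j, CondH1 (fR j) (fI j) (lRR j) (lRI j) (lIR j) (lII j))
    (hg : ∀ j, CondH2 (gR j) (gI j) (mRR j) (mRI j) (mIR j) (mII j))
    (ξ φ : Fin n → ℝ) (hξ : ∀ j, 0 < ξ j) (hφ : ∀ j, 0 < φ j)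
    (hT9 : ∀ k : Fin n,
      -(ξ k) * d k
      + max (ξ k * aR k k + (∑ j ∈ Finset.univ.erase k, ξ j * |aR j k|)
             + (∑ j, φ j * |aI j k|)) 0 * lRR k
      + max (-(ξ k * aI k k) + (∑ j ∈ Finset.univ.erase k, ξ j * |aI j k|)
             + (∑ j, φ j * |aR j k|)) 0 * lIR k
      + (∑ j, (ξ j * (|bR j k| * mRR k + |bI j k| * mIR k)
               + φ j * (|bR j k| * mIR k + |bI j k| * mRR k))) < 0)
    (hT10 : ∀ k : Fin n,
      -(φ k) * d k
      + max (φ k * aR k k + (∑ j ∈ Finset.univ.erase k, φ j * |aR j k|)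
             + (∑ j, ξ j * |aI j k|)) 0 * lII k
      + max (φ k * aI k k + (∑ j ∈ Finset.univ.erase k, φ j * |aI j k|)
             + (∑ j, ξ j * |aR j k|)) 0 * lRI k
      + (∑ j, (ξ j * (|bR j k| * mRI k + |bI j k| * mII k)
               + φ j * (|bR j k| * mII k + |bI j k| * mRI k))) < 0)
    (hsol : ∃ zR zI, IsSolution n d aR aI bR bI τ uR uI fR fI gR gI zR zI) :
    ∃ zbR zbI : Fin n → ℝ,
      IsEquilibrium n d aR aI bR bI uR uI fR fI gR gI zbR zbI ∧
      (∀ wR wI : Fin n → ℝ,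
        IsEquilibrium n d aR aI bR bI uR uI fR fI gR gI wR wI → wR = zbR ∧ wI = zbI) ∧
      (∀ zR zI : Fin n → ℝ → ℝ,
        IsSolution n d aR aI bR bI τ uR uI fR fI gR gI zR zI →
        ∃ c δ : ℝ, 0 < c ∧ 0 < δ ∧ ∀ t : ℝ, 0 ≤ t →
          Real.sqrt ((∑ j, (zR j t - zbR j) ^ 2) + ∑ j, (zI j t - zbI j) ^ 2)
            ≤ c * Real.exp (-δ * t)) :=
  stmt4_general n d aR aI bR bI τ hτ uR uI fR fI gR gI lRR lRI lIR lII mRR mRI mIR mII hf hg ξ φ hξ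
    hφ hT9 hT10 hsol
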